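/- arXiv:0705.0170 — 2 statements merged into one kernel-verified Lean document; each statement's English description precedes it below -/
import Mathlib

section
/- Let n ≥ 5 and let A = 2^{1/n}·M, where M is the real n×n matrix with M_{ii} = 1 for 1 ≤ i ≤ n−1, M_{in} = 1/2 for 1 ≤ i ≤ n, and all other entries 0. Then syst(A) = 2^{1/n}. -/
/-- The Euclidean norm of a vector in `ℝⁿ`. -/
noncomputable def eNorm {n : ℕ} (x : Fin n → ℝ) : ℝ :=
  Real.sqrt (∑ i, (x i) ^ 2)

/-- The Euclidean norm of `A v` for an integer vector `v`. -/
noncomputable def latNorm {n : ℕ} (A : Matrix (Fin n) (Fin n) ℝ) (v : Fin n → ℤ) : ℝ :=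
  eNorm (A.mulVec (fun i => (v i : ℝ)))

/-- The systole of `A`: the infimum (in fact minimum) of `‖A v‖` over nonzero
integer vectors `v ∈ ℤⁿ`. -/
noncomputable def syst {n : ℕ} (A : Matrix (Fin n) (Fin n) ℝ) : ℝ :=
  sInf {r | ∃ v : Fin n → ℤ, v ≠ 0 ∧ r = latNorm A v}

/-- The matrix `M` with `M i i = 1` for `i` in the upper-left `(n-1) × (n-1)` block,
last column constantly `1/2`, and all other entries `0`. -/
noncomputable def Mmat (n : ℕ) : Matrix (Fin n) (Fin n) ℝ :=
  Matrix.of fun i j => if (j : ℕ) = n - 1 then 1 / 2 else if i = j then 1 else 0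

/-- The matrix `A = 2^(1/n) • M` (which has determinant `1`). -/
noncomputable def Amat (n : ℕ) : Matrix (Fin n) (Fin n) ℝ :=
  ((2 : ℝ) ^ ((1 : ℝ) / n)) • Mmat n

/-!
Write `L` for the last index. For `v ∈ ℤⁿ` the vector `m = 2 M v` is integral, with
`m L = v L` and `m i = 2 v i + v L` otherwise, so all entries of `m` have the parity of `v L`,
and `m = 0` only if `v = 0`. A nonzero even `m` has an entry of absolute value `≥ 2`; an odd
`m` has all `n ≥ 4` entries nonzero. Either way `‖m‖² ≥ 4`, i.e. `‖M v‖ ≥ 1`, with equality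
at `v = e₀`; scaling by `2^(1/n)` gives the systole.
-/

open Matrix

lemma eNorm_smul {n : ℕ} (c : ℝ) (x : Fin n → ℝ) : eNorm (c • x) = |c| * eNorm x := by
  simp only [eNorm, Pi.smul_apply, smul_eq_mul, mul_pow, ← Finset.mul_sum]
  rw [Real.sqrt_mul (sq_nonneg c), Real.sqrt_sq_eq_abs]

lemma latNorm_smul {n : ℕ} (c : ℝ) (A : Matrix (Fin n) (Fin n) ℝ) (v : Fin n → ℤ) :
    latNorm (c • A) v = |c| * latNorm A v := by
  rw [latNorm, Matrix.smul_mulVec, eNorm_smul, latNorm]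

lemma eNorm_single {n : ℕ} (i : Fin n) : eNorm (Pi.single i 1) = 1 := by
  simp [eNorm, Pi.single_apply, sq]

lemma four_le_sum_sq_of_even_iff {ι : Type*} [Fintype ι] (hcard : 4 ≤ Fintype.card ι)
    (m : ι → ℤ) (hm : m ≠ 0) (hpar : ∀ i j, Even (m i) ↔ Even (m j)) :
    4 ≤ ∑ i, m i ^ 2 := by
  obtain ⟨i₀, hi₀⟩ := Function.ne_iff.mp hm
  by_cases heven : Even (m i₀)
  · obtain ⟨k, hk⟩ := heven
    have hk0 : k ≠ 0 := by rintro rfl; simp_all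
    calc (4 : ℤ) ≤ m i₀ ^ 2 := by
          rw [hk, ← two_mul, mul_pow]
          nlinarith [(one_le_sq_iff_one_le_abs k).mpr (Int.one_le_abs hk0)]
      _ ≤ ∑ i, m i ^ 2 := Finset.single_le_sum (fun i _ => sq_nonneg (m i)) (Finset.mem_univ i₀)
  · have hodd : ∀ i, 1 ≤ m i ^ 2 := fun i => by
      have hi : m i ≠ 0 := fun h => heven ((hpar i₀ i).mpr (h ▸ Even.zero))
      exact (one_le_sq_iff_one_le_abs _).mpr (Int.one_le_abs hi)
    calc (4 : ℤ) ≤ Fintype.card ι := by exact_mod_cast hcard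
      _ = ∑ _i : ι, (1 : ℤ) := by simp
      _ ≤ ∑ i, m i ^ 2 := Finset.sum_le_sum fun i _ => hodd i

lemma Mmat_succ_mulVec_apply {k : ℕ} (x : Fin (k + 1) → ℝ) (i : Fin (k + 1)) :
    (Mmat (k + 1) *ᵥ x) i = (if i = Fin.last k then 0 else x i) + x (Fin.last k) / 2 := by
  have hlast : ∀ j : Fin (k + 1), (j : ℕ) = k + 1 - 1 ↔ j = Fin.last k := fun j => by
    simp [Fin.ext_iff]
  simp only [Matrix.mulVec, dotProduct, Mmat, Matrix.of_apply, hlast]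
  by_cases hi : i = Fin.last k
  · subst hi
    rw [Fintype.sum_eq_single (Fin.last k) fun j hj => by simp [hj, Ne.symm hj]]
    simp [div_eq_inv_mul]
  · rw [Fintype.sum_eq_add i (Fin.last k) hi fun j hj => by simp [hj.2, Ne.symm hj.1]]
    simp [hi, div_eq_inv_mul]

lemma two_smul_Mmat_succ_mulVec {k : ℕ} (v : Fin (k + 1) → ℤ) :
    (2 : ℝ) • (Mmat (k + 1) *ᵥ fun i => (v i : ℝ))
      = fun i => (((if i = Fin.last k then 0 else 2 * v i) + v (Fin.last k) : ℤ) : ℝ) := by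
  ext i
  rw [Pi.smul_apply, Mmat_succ_mulVec_apply]
  split_ifs <;> push_cast <;> ring

lemma one_le_latNorm_Mmat {k : ℕ} (hk : 3 ≤ k) (v : Fin (k + 1) → ℤ) (hv : v ≠ 0) :
    1 ≤ latNorm (Mmat (k + 1)) v := by
  set m : Fin (k + 1) → ℤ := fun i => (if i = Fin.last k then 0 else 2 * v i) + v (Fin.last k)
  have hm : m ≠ 0 := by
    contrapose! hv
    have hlast : v (Fin.last k) = 0 := by simpa [m] using congrFun hv (Fin.last k)
    ext i
    have := congrFun hv i
    by_cases hi : i = Fin.last k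
    · rwa [hi]
    · simp only [m, hi, if_false, hlast, Pi.zero_apply] at this ⊢
      omega
  have hpar : ∀ i j, Even (m i) ↔ Even (m j) := by
    have h : ∀ i, Even (m i) ↔ Even (v (Fin.last k)) := fun i => by
      by_cases hi : i = Fin.last k <;> simp [m, hi, Int.even_add, parity_simps]
    exact fun i j => (h i).trans (h j).symm
  have h4 := four_le_sum_sq_of_even_iff (by simp; omega) m hm hpar
  have h2 : 2 ≤ eNorm ((2 : ℝ) • (Mmat (k + 1) *ᵥ fun i => (v i : ℝ))) := by
    rw [two_smul_Mmat_succ_mulVec, eNorm, Real.le_sqrt zero_le_two (by positivity)]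
    exact_mod_cast h4
  rw [eNorm_smul, abs_two] at h2
  rw [latNorm]; linarith

lemma latNorm_Mmat_single_zero {k : ℕ} (hk : 0 < k) :
    latNorm (Mmat (k + 1)) (Pi.single 0 1) = 1 := by
  have h : (Mmat (k + 1) *ᵥ fun i => ((Pi.single 0 1 : Fin (k + 1) → ℤ) i : ℝ)) =
      Pi.single 0 1 := by
    ext i
    rw [Mmat_succ_mulVec_apply]
    by_cases hi : i = Fin.last k <;> by_cases hi0 : i = 0 <;> simp [hi, hi0, hk.ne']
  rw [latNorm, h, eNorm_single]

/-- For `n ≥ 5` and `A = 2^(1/n) • M`, one has `syst A = 2^(1/n)`. -/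
theorem syst_Amat {n : ℕ} (hn : 5 ≤ n) :
    syst (Amat n) = (2 : ℝ) ^ ((1 : ℝ) / n) := by
  obtain ⟨k, rfl⟩ : ∃ k, n = k + 1 := ⟨n - 1, by omega⟩
  have hc : |(2 : ℝ) ^ ((1 : ℝ) / (k + 1 : ℕ))| = (2 : ℝ) ^ ((1 : ℝ) / (k + 1 : ℕ)) :=
    abs_of_pos (by positivity)
  refine IsLeast.csInf_eq ⟨⟨Pi.single 0 1, by simp, ?_⟩, ?_⟩
  · rw [Amat, latNorm_smul, hc, latNorm_Mmat_single_zero (by omega), mul_one]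
  · rintro r ⟨v, hv, rfl⟩
    rw [Amat, latNorm_smul, hc]
    exact le_mul_of_one_le_right (by positivity) (one_le_latNorm_Mmat (by omega) v hv)
end

section
/- Let n ≥ 2, let A = 2^{1/n}·M with M the real n×n matrix with M_{ii} = 1 for 1 ≤ i ≤ n−1, M_{in} = 1/2 for 1 ≤ i ≤ n, and all other entries 0, and let H be a real n×n diagonal matrix with positive diagonal entries. If v ∈ ℤⁿ is a nonzero integer vector with ‖HAv‖ = syst(HA) whose last coordinate vₙ is positive, then vₙ = 1 or vₙ = 2. -/
open Matrix

lemma eNorm_lt_of_abs_lt {n : ℕ} {x y : Fin n → ℝ} (j : Fin n) (hj : |y j| < |x j|)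
    (h : ∀ i ≠ j, y i = x i) : eNorm y < eNorm x := by
  refine Real.sqrt_lt_sqrt (by positivity)
    (Finset.sum_lt_sum (fun i _ => ?_) ⟨j, Finset.mem_univ _, sq_lt_sq.2 hj⟩)
  by_cases hi : i = j
  · exact hi ▸ (sq_lt_sq.2 hj).le
  · rw [h i hi]

lemma syst_le_latNorm {n : ℕ} (A : Matrix (Fin n) (Fin n) ℝ) {u : Fin n → ℤ} (hu : u ≠ 0) :
    syst A ≤ latNorm A u :=
  csInf_le ⟨0, by rintro _ ⟨w, -, rfl⟩; exact Real.sqrt_nonneg _⟩ ⟨u, hu, rfl⟩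

section

variable {n : ℕ} {j : Fin n}

lemma Mmat_mulVec_apply (hj : (j : ℕ) = n - 1) (x : Fin n → ℝ) (i : Fin n) :
    (Mmat n *ᵥ x) i = (if i = j then 0 else x i) + x j / 2 := by
  have hcol : ∀ k : Fin n, ((k : ℕ) = n - 1) ↔ k = j := fun k => by rw [← hj, Fin.val_inj]
  simp only [mulVec, dotProduct, Mmat, of_apply, hcol]
  rw [Fintype.sum_eq_add_sum_compl j, if_pos rfl,
    Finset.sum_congr rfl fun k hk => by rw [if_neg (by simpa using hk)]]
  simp only [ite_mul, one_mul, zero_mul, Finset.sum_ite_eq, Finset.mem_compl,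
    Finset.mem_singleton]
  split_ifs <;> ring

lemma diagonal_mul_Amat_mulVec_apply (hj : (j : ℕ) = n - 1) (a x : Fin n → ℝ) (i : Fin n) :
    ((diagonal a * Amat n) *ᵥ x) i
      = (2 : ℝ) ^ ((1 : ℝ) / n) * a i * ((if i = j then 0 else x i) + x j / 2) := by
  rw [← mulVec_mulVec, mulVec_diagonal, Amat, smul_mulVec, Pi.smul_apply, smul_eq_mul,
    Mmat_mulVec_apply hj]
  ring

lemma latNorm_add_update_one_lt (hj : (j : ℕ) = n - 1) {a : Fin n → ℝ} (ha : a j ≠ 0)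
    {v : Fin n → ℤ} (hv : 1 < v j) :
    latNorm (diagonal a * Amat n) (v + Function.update (1 : Fin n → ℤ) j (-2))
      < latNorm (diagonal a * Amat n) v := by
  have hv' : (1 : ℝ) < v j := by exact_mod_cast hv
  refine eNorm_lt_of_abs_lt j ?_ fun i hi => ?_
  · simp only [diagonal_mul_Amat_mulVec_apply hj, if_pos, Pi.add_apply, Function.update_self,
      zero_add, abs_mul _ ((_ : ℝ) / 2)]
    refine mul_lt_mul_of_pos_left ?_ (abs_pos.2 (mul_ne_zero (by positivity) ha))
    rw [abs_of_pos (by positivity : (0 : ℝ) < v j / 2), abs_lt]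
    push_cast
    constructor <;> linarith
  · simp only [diagonal_mul_Amat_mulVec_apply hj, Pi.add_apply, if_neg hi,
      Function.update_of_ne hi, Function.update_self, Pi.one_apply]
    push_cast
    ring

end

/-- For `H` diagonal with positive entries and `A = 2^(1/n) • M`, any shortest nonzero
integer vector of `H A` with positive last coordinate has last coordinate `1` or `2`. -/
theorem last_coord_of_shortest {n : ℕ} (hn : 2 ≤ n) (a : Fin n → ℝ) (ha : ∀ i, 0 < a i)
    (v : Fin n → ℤ)
    (hshort : latNorm (Matrix.diagonal a * Amat n) v = syst (Matrix.diagonal a * Amat n))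
    (hpos : 0 < v ⟨n - 1, by omega⟩) :
    v ⟨n - 1, by omega⟩ = 1 ∨ v ⟨n - 1, by omega⟩ = 2 := by
  set j : Fin n := ⟨n - 1, by omega⟩
  by_contra hj
  have hvj : 3 ≤ v j := by omega
  have hw : v + Function.update (1 : Fin n → ℤ) j (-2) ≠ 0 := fun h => by
    have := congrFun h j
    simp only [Pi.add_apply, Function.update_self, Pi.zero_apply] at this
    omega
  have hlt := latNorm_add_update_one_lt rfl (ha j).ne' (by omega : 1 < v j)
  have hle := syst_le_latNorm (Matrix.diagonal a * Amat n) hw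
  linarith
end
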